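/- The fiber of the photon potential bundle is exactly the kernel of the momentum contraction: for $p = \kappa(\Lambda)p_0$ on the forward light cone ($\Lambda \in SL(2,\mathbb{C})$), the subspace $\Phi_e(\Lambda) R_e \leq \mathbb{C}^4$, where $R_e = \mathbb{C}p_0 \oplus \mathbb{C}\epsilon_+ \oplus \mathbb{C}\epsilon_-$, equals $\{ z \in \mathbb{C}^4 : p_\mu z^\mu = 0 \}$. -/

import Mathlib

/-!
Write `p = Φ(Λ)p₀` (`κ(Λ)p₀` is real because `Λ X Λᴴ` is Hermitian for Hermitian `X`).
The contraction `p_μ z^μ` is the polarization of `z ↦ det z̃`, and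
`det (Λ z̃ Λᴴ) = |det Λ|² det z̃`, so `Φ(Λ)` preserves it; as `Φ(Λ)` is invertible it maps the
kernel of `(p₀)_μ z^μ` onto the kernel of `p_μ z^μ`. Finally that kernel `{w : w⁰ = w³}` is
`R_e`, since `w = w⁰ p₀ + (w¹ - i w²)/√2 ε₊ + (w¹ + i w²)/√2 ε₋` there.
-/

open Matrix Complex

noncomputable section

def tildeC (x : Fin 4 → ℂ) : Matrix (Fin 2) (Fin 2) ℂ :=
  !![x 0 + x 3, x 1 - Complex.I * x 2; x 1 + Complex.I * x 2, x 0 - x 3]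

def untildeC (M : Matrix (Fin 2) (Fin 2) ℂ) : Fin 4 → ℂ :=
  ![(M 0 0 + M 1 1) / 2, (M 1 0 + M 0 1) / 2,
    (M 1 0 - M 0 1) / (2 * Complex.I), (M 0 0 - M 1 1) / 2]

/-- The complexified Lorentz action `Φ_e(A) = κ(A)` on `ℂ⁴`. -/
def PhiM (A : Matrix (Fin 2) (Fin 2) ℂ) (x : Fin 4 → ℂ) : Fin 4 → ℂ :=
  untildeC (A * tildeC x * Aᴴ)

/-- `κ(A)` on real four-vectors. -/
def kappaM (A : Matrix (Fin 2) (Fin 2) ℂ) (x : Fin 4 → ℝ) : Fin 4 → ℝ :=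
  fun i => (PhiM A (fun j => (x j : ℂ)) i).re

def epsP : Fin 4 → ℂ := ![0, 1 / (Real.sqrt 2 : ℂ), Complex.I / (Real.sqrt 2 : ℂ), 0]
def epsM : Fin 4 → ℂ := ![0, 1 / (Real.sqrt 2 : ℂ), -Complex.I / (Real.sqrt 2 : ℂ), 0]
def p0C : Fin 4 → ℂ := ![1, 0, 0, 1]
def p0R : Fin 4 → ℝ := ![1, 0, 0, 1]

/-- The Minkowski contraction `p_μ z^μ`, extended bilinearly to `ℂ⁴`. -/
def minkC (p z : Fin 4 → ℂ) : ℂ :=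
  p 0 * z 0 - p 1 * z 1 - p 2 * z 2 - p 3 * z 3

lemma tildeC_add (x y : Fin 4 → ℂ) : tildeC (x + y) = tildeC x + tildeC y := by
  ext i j
  fin_cases i <;> fin_cases j <;> simp [tildeC] <;> ring

lemma tildeC_smul (c : ℂ) (x : Fin 4 → ℂ) : tildeC (c • x) = c • tildeC x := by
  ext i j
  fin_cases i <;> fin_cases j <;> simp [tildeC] <;> ring

lemma untildeC_add (M N : Matrix (Fin 2) (Fin 2) ℂ) :
    untildeC (M + N) = untildeC M + untildeC N := by
  funext i
  fin_cases i <;> simp [untildeC] <;> ring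

lemma untildeC_smul (c : ℂ) (M : Matrix (Fin 2) (Fin 2) ℂ) :
    untildeC (c • M) = c • untildeC M := by
  funext i
  fin_cases i <;> simp [untildeC] <;> ring

lemma tildeC_untildeC (M : Matrix (Fin 2) (Fin 2) ℂ) : tildeC (untildeC M) = M := by
  ext i j
  fin_cases i <;> fin_cases j <;> simp [tildeC, untildeC] <;> field_simp <;> ring_nf

lemma untildeC_tildeC (x : Fin 4 → ℂ) : untildeC (tildeC x) = x := by
  funext i
  fin_cases i <;> simp [tildeC, untildeC]
  field_simp
  ring

lemma PhiM_add (A : Matrix (Fin 2) (Fin 2) ℂ) (x y : Fin 4 → ℂ) :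
    PhiM A (x + y) = PhiM A x + PhiM A y := by
  simp only [PhiM, tildeC_add, Matrix.mul_add, Matrix.add_mul, untildeC_add]

lemma PhiM_smul (A : Matrix (Fin 2) (Fin 2) ℂ) (c : ℂ) (x : Fin 4 → ℂ) :
    PhiM A (c • x) = c • PhiM A x := by
  simp only [PhiM, tildeC_smul, Matrix.mul_smul, Matrix.smul_mul, untildeC_smul]

lemma PhiM_mul (A B : Matrix (Fin 2) (Fin 2) ℂ) (x : Fin 4 → ℂ) :
    PhiM (A * B) x = PhiM A (PhiM B x) := by
  simp only [PhiM, tildeC_untildeC, Matrix.conjTranspose_mul, Matrix.mul_assoc]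

lemma PhiM_one (x : Fin 4 → ℂ) : PhiM 1 x = x := by
  simp [PhiM, untildeC_tildeC]

lemma PhiM_PhiM_inv {A : Matrix (Fin 2) (Fin 2) ℂ} (hA : IsUnit A.det) (x : Fin 4 → ℂ) :
    PhiM A (PhiM A⁻¹ x) = x := by
  rw [← PhiM_mul, Matrix.mul_nonsing_inv A hA, PhiM_one]

def PhiMLinear (A : Matrix (Fin 2) (Fin 2) ℂ) : (Fin 4 → ℂ) →ₗ[ℂ] (Fin 4 → ℂ) where
  toFun := PhiM A
  map_add' := PhiM_add A
  map_smul' := PhiM_smul A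

lemma tildeC_isHermitian_ofReal (x : Fin 4 → ℝ) :
    (tildeC fun j => (x j : ℂ)).IsHermitian := by
  ext i j
  fin_cases i <;> fin_cases j <;> simp [tildeC, Complex.ext_iff]

lemma conj_untildeC_of_isHermitian {M : Matrix (Fin 2) (Fin 2) ℂ} (hM : M.IsHermitian)
    (i : Fin 4) : starRingEnd ℂ (untildeC M i) = untildeC M i := by
  have h00 : starRingEnd ℂ (M 0 0) = M 0 0 := by simpa using congrFun₂ hM 0 0
  have h11 : starRingEnd ℂ (M 1 1) = M 1 1 := by simpa using congrFun₂ hM 1 1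
  have h10 : starRingEnd ℂ (M 0 1) = M 1 0 := by simpa using congrFun₂ hM 1 0
  have h01 : starRingEnd ℂ (M 1 0) = M 0 1 := by simpa using congrFun₂ hM 0 1
  fin_cases i <;> simp [untildeC, h00, h11, h10, h01, map_ofNat] <;> ring

lemma ofReal_kappaM (A : Matrix (Fin 2) (Fin 2) ℂ) (x : Fin 4 → ℝ) :
    (fun i => (kappaM A x i : ℂ)) = PhiM A fun j => (x j : ℂ) := by
  funext i
  exact Complex.conj_eq_iff_re.mp <| conj_untildeC_of_isHermitian
    (isHermitian_mul_mul_conjTranspose A (tildeC_isHermitian_ofReal x)) i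

lemma ofReal_p0R : (fun j => (p0R j : ℂ)) = p0C := by
  funext j
  fin_cases j <;> simp [p0R, p0C]

lemma minkC_add_right (p x y : Fin 4 → ℂ) : minkC p (x + y) = minkC p x + minkC p y := by
  simp only [minkC, Pi.add_apply]; ring

def minkCLinear (p : Fin 4 → ℂ) : (Fin 4 → ℂ) →ₗ[ℂ] ℂ where
  toFun := minkC p
  map_add' := minkC_add_right p
  map_smul' c x := by simp only [minkC, Pi.smul_apply, smul_eq_mul, RingHom.id_apply]; ring

lemma minkC_add_self (x y : Fin 4 → ℂ) :
    minkC (x + y) (x + y) = minkC x x + minkC y y + 2 * minkC x y := by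
  simp only [minkC, Pi.add_apply]; ring

lemma minkC_self_eq_det (x : Fin 4 → ℂ) : minkC x x = (tildeC x).det := by
  simp only [minkC, tildeC, Matrix.det_fin_two_of]
  linear_combination (-(x 2 * x 2)) * Complex.I_mul_I

lemma minkC_PhiM_self {A : Matrix (Fin 2) (Fin 2) ℂ} (hA : A.det = 1) (x : Fin 4 → ℂ) :
    minkC (PhiM A x) (PhiM A x) = minkC x x := by
  rw [minkC_self_eq_det, minkC_self_eq_det, PhiM, tildeC_untildeC, det_mul, det_mul,
    det_conjTranspose, hA, star_one, one_mul, mul_one]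

lemma minkC_PhiM {A : Matrix (Fin 2) (Fin 2) ℂ} (hA : A.det = 1) (x y : Fin 4 → ℂ) :
    minkC (PhiM A x) (PhiM A y) = minkC x y := by
  have h := minkC_PhiM_self hA (x + y)
  rw [PhiM_add, minkC_add_self, minkC_add_self, minkC_PhiM_self hA, minkC_PhiM_self hA] at h
  linear_combination h / 2

lemma image_PhiM_setOf_minkC {A : Matrix (Fin 2) (Fin 2) ℂ} (hA : A.det = 1)
    (p : Fin 4 → ℂ) :
    PhiM A '' {w | minkC p w = 0} = {z | minkC (PhiM A p) z = 0} := by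
  have hunit : IsUnit A.det := hA ▸ isUnit_one
  ext z
  constructor
  · rintro ⟨w, hw, rfl⟩
    exact (minkC_PhiM hA p w).trans hw
  · intro hz
    refine ⟨PhiM A⁻¹ z, ?_, PhiM_PhiM_inv hunit z⟩
    exact (minkC_PhiM hA p _).symm.trans ((PhiM_PhiM_inv hunit z).symm ▸ hz)

lemma minkC_p0C (w : Fin 4 → ℂ) : minkC p0C w = w 0 - w 3 := by
  simp [minkC, p0C]

lemma eq_sum_p0C_epsP_epsM {w : Fin 4 → ℂ} (hw : minkC p0C w = 0) :
    w = w 0 • p0C + ((w 1 - I * w 2) / (Real.sqrt 2 : ℂ)) • epsP +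
      ((w 1 + I * w 2) / (Real.sqrt 2 : ℂ)) • epsM := by
  have hs : ((Real.sqrt 2 : ℝ) : ℂ) ^ 2 = 2 := by
    rw [← Complex.ofReal_pow, Real.sq_sqrt zero_le_two]; norm_num
  have h03 : w 3 = w 0 := by linear_combination minkC_p0C w - hw
  funext i
  fin_cases i <;> simp [p0C, epsP, epsM, h03] <;> field_simp
  · linear_combination w 1 * hs
  · linear_combination w 2 * hs + 2 * w 2 * I_mul_I

lemma span_p0C_epsP_epsM :
    Submodule.span ℂ {p0C, epsP, epsM} = LinearMap.ker (minkCLinear p0C) := by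
  refine le_antisymm (Submodule.span_le.mpr ?_) fun w hw => ?_
  · rintro _ (rfl | rfl | rfl) <;> simp [minkCLinear, minkC, p0C, epsP, epsM]
  · rw [eq_sum_p0C_epsP_epsM hw]
    refine Submodule.add_mem _ (Submodule.add_mem _ ?_ ?_) ?_ <;>
      exact Submodule.smul_mem _ _ (Submodule.subset_span (by simp))

theorem photon_potential_fiber (A : Matrix (Fin 2) (Fin 2) ℂ) (hA : A.det = 1) :
    (Submodule.span ℂ {PhiM A p0C, PhiM A epsP, PhiM A epsM} :
        Set (Fin 4 → ℂ)) =
      {z : Fin 4 → ℂ | minkC (fun i => ((kappaM A p0R i : ℝ) : ℂ)) z = 0} := by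
  have hspan : Submodule.span ℂ {PhiM A p0C, PhiM A epsP, PhiM A epsM} =
      (LinearMap.ker (minkCLinear p0C)).map (PhiMLinear A) := by
    rw [← span_p0C_epsP_epsM, Submodule.map_span]
    simp only [Set.image_insert_eq, Set.image_singleton]
    rfl
  rw [ofReal_kappaM, ofReal_p0R, hspan, Submodule.map_coe]
  exact image_PhiM_setOf_minkC hA p0C
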